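/- arXiv:1707.03992 — 3 statements merged into one kernel-verified Lean document; each statement's English description precedes it below -/
import Mathlib

section
/- Let V be a finite set with s, t ∈ V, and let x : E → ℝ≥0 be a nonnegative function on the edge set E of the complete graph on V satisfying x(δ(U)) ≥ 2 for all nonempty U ⊆ V \ {s,t} and x(δ(U)) ≥ 1 for all U with s ∈ U ⊆ V \ {t}. Then for any two sets X, Y with s ∈ X ∩ Y, t ∉ X ∪ Y, x(δ(X)) < 2 and x(δ(Y)) < 2, we have X ⊆ Y or Y ⊆ X. Hence the narrow cuts form a chain. -/
open Finset

/-- The value `x(δ(U))` of the cut induced by `U` in the complete graph on `V`,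
with edge weights `x` (given on unordered pairs). -/
noncomputable def cutVal {V : Type*} [Fintype V] [DecidableEq V]
    (x : Sym2 V → ℝ) (U : Finset V) : ℝ :=
  ∑ v ∈ U, ∑ w ∈ Uᶜ, x s(v, w)

noncomputable def pairVal {V : Type*} [Fintype V] [DecidableEq V]
    (x : Sym2 V → ℝ) (P Q : Finset V) : ℝ :=
  ∑ v ∈ P, ∑ w ∈ Q, x s(v, w)

lemma pairVal_comm {V : Type*} [Fintype V] [DecidableEq V]
    (x : Sym2 V → ℝ) (P Q : Finset V) : pairVal x P Q = pairVal x Q P := by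
  unfold pairVal
  rw [Finset.sum_comm]
  simp only [Sym2.eq_swap]

lemma pairVal_union_left {V : Type*} [Fintype V] [DecidableEq V]
    (x : Sym2 V → ℝ) {P P' : Finset V} (Q : Finset V) (h : Disjoint P P') :
    pairVal x (P ∪ P') Q = pairVal x P Q + pairVal x P' Q :=
  Finset.sum_union h

lemma pairVal_union_right {V : Type*} [Fintype V] [DecidableEq V]
    (x : Sym2 V → ℝ) (P : Finset V) {Q Q' : Finset V} (h : Disjoint Q Q') :
    pairVal x P (Q ∪ Q') = pairVal x P Q + pairVal x P Q' := by
  unfold pairVal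
  rw [← Finset.sum_add_distrib]
  exact Finset.sum_congr rfl fun v _ => Finset.sum_union h

lemma pairVal_nonneg {V : Type*} [Fintype V] [DecidableEq V]
    (x : Sym2 V → ℝ) (hx : ∀ e, 0 ≤ x e) (P Q : Finset V) :
    0 ≤ pairVal x P Q :=
  Finset.sum_nonneg fun _ _ => Finset.sum_nonneg fun _ _ => hx _

lemma cutVal_eq_pairVal {V : Type*} [Fintype V] [DecidableEq V]
    (x : Sym2 V → ℝ) (U : Finset V) : cutVal x U = pairVal x U Uᶜ := rfl

/-- Narrow cuts form a chain: any two narrow cuts (containing `s`, avoiding `t`)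
of a feasible solution of the path LP are comparable. -/
theorem stmt_0 {V : Type*} [Fintype V] [DecidableEq V] (s t : V)
    (x : Sym2 V → ℝ) (hx : ∀ e, 0 ≤ x e)
    (h2 : ∀ U : Finset V, U.Nonempty → U ⊆ univ \ {s, t} → 2 ≤ cutVal x U)
    (h1 : ∀ U : Finset V, s ∈ U → U ⊆ univ \ {t} → 1 ≤ cutVal x U)
    (X Y : Finset V) (hsX : s ∈ X) (hsY : s ∈ Y) (htX : t ∉ X) (htY : t ∉ Y)
    (hX : cutVal x X < 2) (hY : cutVal x Y < 2) :
    X ⊆ Y ∨ Y ⊆ X := by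
  by_contra hcon
  push_neg at hcon
  obtain ⟨hXY, hYX⟩ := hcon
  set A : Finset V := X ∩ Y with hA
  set B : Finset V := X \ Y with hB
  set C : Finset V := Y \ X with hC
  set D : Finset V := (X ∪ Y)ᶜ with hD
  have hBne : B.Nonempty := by
    rw [Finset.sdiff_nonempty]; exact hXY
  have hCne : C.Nonempty := by
    rw [Finset.sdiff_nonempty]; exact hYX
  have hBsub : B ⊆ univ \ {s, t} := by
    intro v hv
    simp only [hB, Finset.mem_sdiff] at hv
    simp only [Finset.mem_sdiff, Finset.mem_univ, Finset.mem_insert,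
      Finset.mem_singleton, true_and]
    rintro (rfl | rfl)
    · exact hv.2 hsY
    · exact htX hv.1
  have hCsub : C ⊆ univ \ {s, t} := by
    intro v hv
    simp only [hC, Finset.mem_sdiff] at hv
    simp only [Finset.mem_sdiff, Finset.mem_univ, Finset.mem_insert,
      Finset.mem_singleton, true_and]
    rintro (rfl | rfl)
    · exact hv.2 hsX
    · exact htY hv.1
  have hB2 : 2 ≤ cutVal x B := h2 B hBne hBsub
  have hC2 : 2 ≤ cutVal x C := h2 C hCne hCsub
  -- disjointness facts
  have dAB : Disjoint A B := by
    simp only [hA, hB, Finset.disjoint_left, Finset.mem_inter, Finset.mem_sdiff]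
    tauto
  have dAC : Disjoint A C := by
    simp only [hA, hC, Finset.disjoint_left, Finset.mem_inter, Finset.mem_sdiff]
    tauto
  have dCD : Disjoint C D := by
    simp only [hC, hD, Finset.disjoint_left, Finset.mem_sdiff, Finset.mem_compl,
      Finset.mem_union]
    tauto
  have dBD : Disjoint B D := by
    simp only [hB, hD, Finset.disjoint_left, Finset.mem_sdiff, Finset.mem_compl,
      Finset.mem_union]
    tauto
  have dA_CD : Disjoint A (C ∪ D) := by
    simp only [hA, hC, hD, Finset.disjoint_left, Finset.mem_inter, Finset.mem_union,
      Finset.mem_sdiff, Finset.mem_compl]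
    tauto
  have dA_BD : Disjoint A (B ∪ D) := by
    simp only [hA, hB, hD, Finset.disjoint_left, Finset.mem_inter, Finset.mem_union,
      Finset.mem_sdiff, Finset.mem_compl]
    tauto
  -- set equalities
  have eX : X = A ∪ B := by
    ext v; simp only [hA, hB, Finset.mem_union, Finset.mem_inter, Finset.mem_sdiff]
    tauto
  have eXc : Xᶜ = C ∪ D := by
    ext v; simp only [hC, hD, Finset.mem_compl, Finset.mem_union, Finset.mem_sdiff]
    tauto
  have eY : Y = A ∪ C := by
    ext v; simp only [hA, hC, Finset.mem_union, Finset.mem_inter, Finset.mem_sdiff]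
    tauto
  have eYc : Yᶜ = B ∪ D := by
    ext v; simp only [hB, hD, Finset.mem_compl, Finset.mem_union, Finset.mem_sdiff]
    tauto
  have eBc : Bᶜ = A ∪ (C ∪ D) := by
    ext v; simp only [hA, hB, hC, hD, Finset.mem_compl, Finset.mem_union,
      Finset.mem_inter, Finset.mem_sdiff]
    tauto
  have eCc : Cᶜ = A ∪ (B ∪ D) := by
    ext v; simp only [hA, hB, hC, hD, Finset.mem_compl, Finset.mem_union,
      Finset.mem_inter, Finset.mem_sdiff]
    tauto
  -- expansions
  have hXexp : cutVal x X = pairVal x A C + pairVal x A D + pairVal x B C + pairVal x B D := by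
    rw [cutVal_eq_pairVal, eXc, eX, pairVal_union_left x _ dAB,
      pairVal_union_right x _ dCD, pairVal_union_right x _ dCD]
    ring
  have hYexp : cutVal x Y = pairVal x A B + pairVal x A D + pairVal x C B + pairVal x C D := by
    rw [cutVal_eq_pairVal, eYc, eY, pairVal_union_left x _ dAC,
      pairVal_union_right x _ dBD, pairVal_union_right x _ dBD]
    ring
  have hBexp : cutVal x B = pairVal x B A + pairVal x B C + pairVal x B D := by
    rw [cutVal_eq_pairVal, eBc, pairVal_union_right x _ dA_CD,
      pairVal_union_right x _ dCD]
    ring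
  have hCexp : cutVal x C = pairVal x C A + pairVal x C B + pairVal x C D := by
    rw [cutVal_eq_pairVal, eCc, pairVal_union_right x _ dA_BD,
      pairVal_union_right x _ dBD]
    ring
  have c1 := pairVal_comm x A B
  have c2 := pairVal_comm x A C
  have c3 := pairVal_comm x B C
  have hAD := pairVal_nonneg x hx A D
  linarith
end

section
/- Let (V, S) be a spanning tree of the complete graph on V, let s ≠ t in V, and let T := {v ∈ V : deg_S(v) is odd} △ {s} △ {t}. Then |T| is even, and for every U with s ∈ U ⊆ V \ {t}: |S ∩ δ(U)| is odd if and only if |U ∩ T| is even. -/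
open Finset
open scoped symmDiff

open scoped Classical in
/-- The set of edges `δ(U)` of the complete graph on `V` with exactly one endpoint in `U`. -/
noncomputable def cutEdges {V : Type*} [Fintype V] (U : Finset V) : Finset (Sym2 V) :=
  Finset.univ.filter (fun e => ∃ v w : V, e = s(v, w) ∧ v ∈ U ∧ w ∉ U)

open scoped Classical in
/-- The degree of `v` in the edge set `S`. -/
noncomputable def degS {V : Type*} (S : Finset (Sym2 V)) (v : V) : ℕ :=
  (S.filter (fun e => v ∈ e)).card

open scoped Classical in
/-- Parity correction set `T = {v : deg_S(v) odd} △ {s} △ {t}`. -/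
noncomputable def wrongParity {V : Type*} [Fintype V] (S : Finset (Sym2 V)) (s t : V) :
    Finset V :=
  (Finset.univ.filter (fun v => Odd (degS S v))) ∆ {s} ∆ {t}

/-! Double count the incidences between `U` and the edges of `S`: a non-loop edge has exactly
one endpoint in `U` when it lies in `δ(U)`, and zero or two otherwise, so
`∑_{v ∈ U} deg_S v ≡ |S ∩ δ(U)| (mod 2)`. For `U = V` this is the handshake lemma, so the
odd-degree vertices are even in number and so is `T`; for an `s`-`t`-cut `U`, the set `U ∩ T`
is the set of odd-degree vertices of `U` with `s` toggled. -/

namespace Finset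

variable {α : Type*} [DecidableEq α]

theorem card_symmDiff_add_two_mul_card_inter (s t : Finset α) :
    #(s ∆ t) + 2 * #(s ∩ t) = #s + #t := by
  rw [Finset.symmDiff_def, card_union_of_disjoint disjoint_sdiff_sdiff]
  have := card_sdiff_add_card_inter s t
  have := card_sdiff_add_card_inter t s
  rw [inter_comm t s] at this
  omega

theorem even_card_symmDiff_iff (s t : Finset α) :
    Even #(s ∆ t) ↔ (Even #s ↔ Even #t) := by
  rw [← Nat.even_add, ← card_symmDiff_add_two_mul_card_inter]
  simp [Nat.even_add]

end Finset

theorem mk_mem_cutEdges_iff {V : Type*} [Fintype V] {U : Finset V} {a b : V} :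
    s(a, b) ∈ cutEdges U ↔ (a ∈ U ↔ b ∉ U) := by
  simp only [cutEdges, mem_filter, mem_univ, true_and, Sym2.eq_iff]
  constructor
  · rintro ⟨v, w, ⟨rfl, rfl⟩ | ⟨rfl, rfl⟩, hv, hw⟩ <;> tauto
  · intro h
    by_cases ha : a ∈ U
    · exact ⟨a, b, Or.inl ⟨rfl, rfl⟩, ha, h.1 ha⟩
    · exact ⟨b, a, Or.inr ⟨rfl, rfl⟩, not_not.1 (mt h.2 ha), ha⟩

theorem odd_card_filter_mem_iff_mem_cutEdges {V : Type*} [Fintype V] [DecidableEq V]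
    (U : Finset V) {e : Sym2 V} (he : ¬ e.IsDiag) :
    Odd #{v ∈ U | v ∈ e} ↔ e ∈ cutEdges U := by
  induction e using Sym2.ind with
  | _ a b =>
    have hab : a ≠ b := by simpa using he
    rw [mk_mem_cutEdges_iff]
    by_cases ha : a ∈ U <;> by_cases hb : b ∈ U <;> simp [filter_or, filter_eq', ha, hb, hab]

theorem sum_degS_eq_sum_card_filter_mem {V : Type*} [DecidableEq V] (S : Finset (Sym2 V))
    (U : Finset V) : ∑ v ∈ U, degS S v = ∑ e ∈ S, #{v ∈ U | v ∈ e} := by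
  unfold degS
  convert sum_card_bipartiteAbove_eq_sum_card_bipartiteBelow (fun (v : V) (e : Sym2 V) => v ∈ e)
    <;> ext <;> simp [bipartiteAbove, bipartiteBelow]

theorem odd_card_filter_odd_degS_iff {V : Type*} [Fintype V] [DecidableEq V]
    {S : Finset (Sym2 V)} (hS : ∀ e ∈ S, ¬ e.IsDiag) (U : Finset V) :
    Odd #{v ∈ U | Odd (degS S v)} ↔ Odd #(S ∩ cutEdges U) := by
  rw [← odd_sum_iff_odd_card_odd, sum_degS_eq_sum_card_filter_mem, odd_sum_iff_odd_card_odd,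
    ← filter_mem_eq_inter]
  congr! 2
  exact filter_congr fun e he => odd_card_filter_mem_iff_mem_cutEdges U (hS e he)

theorem even_card_filter_odd_degS {V : Type*} [Fintype V] [DecidableEq V]
    {S : Finset (Sym2 V)} (hS : ∀ e ∈ S, ¬ e.IsDiag) : Even #{v | Odd (degS S v)} := by
  have hcut : cutEdges (univ : Finset V) = ∅ := by simp [cutEdges]
  simpa [hcut] using (odd_card_filter_odd_degS_iff hS univ).not

theorem stmt_5_general {V : Type*} [Fintype V] [DecidableEq V] (s t : V)
    (S : Finset (Sym2 V)) (hdiag : ∀ e ∈ S, ¬ e.IsDiag) :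
    Even (wrongParity S s t).card ∧
      ∀ U : Finset V, s ∈ U → U ⊆ univ \ {t} →
        (Odd ((S ∩ cutEdges U).card) ↔ Even ((U ∩ wrongParity S s t).card)) := by
  have hodd := even_card_filter_odd_degS hdiag
  refine ⟨?_, fun U hs hU => ?_⟩
  · simp [wrongParity, even_card_symmDiff_iff, hodd]
  · have ht : t ∉ U := fun h => by simpa using hU h
    have hUT : U ∩ wrongParity S s t = {v ∈ U | Odd (degS S v)} ∆ {s} := by
      ext v
      simp only [wrongParity, mem_inter, mem_symmDiff, mem_filter, mem_univ, true_and, mem_singleton]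
      grind
    rw [hUT, even_card_symmDiff_iff, ← odd_card_filter_odd_degS_iff hdiag]
    simp [Nat.not_even_iff_odd]

/-- For a spanning tree `(V,S)` and `T` the set of wrong-parity vertices, `|T|` is even,
and an `s`-`t`-cut is crossed an odd number of times by `S` iff it is not a `T`-cut. -/
theorem stmt_5 {V : Type*} [Fintype V] [DecidableEq V] (s t : V) (hst : s ≠ t)
    (S : Finset (Sym2 V)) (hdiag : ∀ e ∈ S, ¬ e.IsDiag)
    (htree : (SimpleGraph.fromEdgeSet (S : Set (Sym2 V))).IsTree) :
    Even (wrongParity S s t).card ∧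
      ∀ U : Finset V, s ∈ U → U ⊆ univ \ {t} →
        (Odd ((S ∩ cutEdges U).card) ↔ Even ((U ∩ wrongParity S s t).card)) :=
  stmt_5_general s t S hdiag
end

section
/- Let V be finite, E the complete graph's edge set, and x : E → ℝ≥0 feasible for the path LP: x(δ(U)) ≥ 2 for all nonempty U ⊆ V \ {s,t} and x(δ(U)) ≥ 1 for all s ∈ U ⊆ V \ {t}. Then for every narrow cut C (i.e. C = δ(U) with s ∈ U, t ∉ U, x(C) < 2) there exists a pair of vertices v, w ∈ V such that C is the unique narrow cut separating v from w. -/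
/-!
Cut functions are posimodular: `x(δ(U \ W)) + x(δ(W \ U)) ≤ x(δ(U)) + x(δ(W))`. If two narrow
cuts `δ(U)`, `δ(W)` crossed, `U \ W` and `W \ U` would be nonempty subsets of `V \ {s, t}`, so the
left side would be at least `4` while the right side is below `4`. Hence the narrow cuts form a
chain, and for `δ(U₀)` in it one takes `v ∈ U₀` outside the next smaller member of the chain and
`w ∉ U₀` inside the next larger one.
-/

open Finset

section Cuts

variable {V : Type*} [Fintype V] [DecidableEq V]

theorem two_mul_cutVal (x : Sym2 V → ℝ) (U : Finset V) :
    2 * cutVal x U = ∑ v, ∑ w, if (v ∈ U ↔ w ∈ U) then 0 else x s(v, w) := by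
  have hswap : ∑ v ∈ Uᶜ, ∑ w ∈ U, x s(v, w) = cutVal x U := by
    rw [cutVal, sum_comm]
    simp_rw [Sym2.eq_swap]
  have hsplit : ∀ v w, (if (v ∈ U ↔ w ∈ U) then 0 else x s(v, w)) =
      (if v ∈ U then if w ∈ Uᶜ then x s(v, w) else 0 else 0) +
      (if v ∈ Uᶜ then if w ∈ U then x s(v, w) else 0 else 0) := by
    intro v w
    by_cases hv : v ∈ U <;> by_cases hw : w ∈ U <;> simp [hv, hw]
  simp only [hsplit, sum_add_distrib, sum_ite_irrel, sum_const_zero, sum_ite_mem, univ_inter]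
  rw [hswap, cutVal]
  ring

theorem cutVal_sdiff_add_cutVal_sdiff_le (x : Sym2 V → ℝ) (hx : ∀ e, 0 ≤ x e)
    (U W : Finset V) :
    cutVal x (U \ W) + cutVal x (W \ U) ≤ cutVal x U + cutVal x W := by
  suffices 2 * cutVal x (U \ W) + 2 * cutVal x (W \ U) ≤ 2 * cutVal x U + 2 * cutVal x W by
    linarith
  simp only [two_mul_cutVal, ← sum_add_distrib]
  refine sum_le_sum fun v _ ↦ sum_le_sum fun w _ ↦ ?_
  have := hx s(v, w)
  by_cases hvU : v ∈ U <;> by_cases hvW : v ∈ W <;> by_cases hwU : w ∈ U <;>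
    by_cases hwW : w ∈ W <;> simp [*]

def IsNarrowCut (s t : V) (x : Sym2 V → ℝ) (U : Finset V) : Prop :=
  s ∈ U ∧ t ∉ U ∧ cutVal x U < 2

theorem isChain_isNarrowCut {s t : V} {x : Sym2 V → ℝ} (hx : ∀ e, 0 ≤ x e)
    (h2 : ∀ U : Finset V, U.Nonempty → U ⊆ univ \ {s, t} → 2 ≤ cutVal x U) :
    IsChain (· ⊆ ·) {U | IsNarrowCut s t x U} := by
  rintro U ⟨hsU, htU, hU⟩ W ⟨hsW, htW, hW⟩ -
  by_contra! hcross
  have hUW := h2 (U \ W) (sdiff_nonempty.mpr hcross.1) (by grind)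
  have hWU := h2 (W \ U) (sdiff_nonempty.mpr hcross.2) (by grind)
  linarith [cutVal_sdiff_add_cutVal_sdiff_le x hx U W]

end Cuts

section Chains

variable {α : Type*} {𝒞 : Set (Finset α)} {U₀ : Finset α}

theorem IsChain.exists_mem_forall_notMem_of_ssubset (h𝒞 : IsChain (· ⊆ ·) 𝒞)
    (hfin : 𝒞.Finite) (hU₀ : U₀.Nonempty) : ∃ v ∈ U₀, ∀ U ∈ 𝒞, U ⊂ U₀ → v ∉ U := by
  rcases (𝒞 ∩ {U | U ⊂ U₀}).eq_empty_or_nonempty with hempty | hbelow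
  · obtain ⟨v, hv⟩ := hU₀
    exact ⟨v, hv, fun U hU hUU₀ _ ↦ hempty.subset ⟨hU, hUU₀⟩⟩
  · obtain ⟨M, ⟨hM, hMU₀⟩, hMmax⟩ := (hfin.inter_of_left _).exists_maximal hbelow
    obtain ⟨v, hvU₀, hvM⟩ := exists_of_ssubset hMU₀
    refine ⟨v, hvU₀, fun U hU hUU₀ hvU ↦ hvM ?_⟩
    have hUM : U ⊆ M := (h𝒞.total hU hM).elim id fun hMU ↦ hMmax ⟨hU, hUU₀⟩ hMU
    exact hUM hvU

variable [Fintype α] [DecidableEq α]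

theorem IsChain.exists_notMem_forall_mem_of_ssuperset (h𝒞 : IsChain (· ⊆ ·) 𝒞)
    (hU₀ : U₀ᶜ.Nonempty) : ∃ w ∉ U₀, ∀ U ∈ 𝒞, U₀ ⊂ U → w ∈ U := by
  have hcompl : IsChain (· ⊆ ·) (compl ⁻¹' 𝒞) := fun U hU W hW hUW ↦
    ((h𝒞 hU hW (compl_injective.ne hUW)).imp compl_subset_compl.mp compl_subset_compl.mp).symm
  obtain ⟨w, hw, hwU⟩ := hcompl.exists_mem_forall_notMem_of_ssubset (Set.toFinite _) hU₀
  refine ⟨w, mem_compl.mp hw, fun U hU hU₀U ↦ ?_⟩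
  by_contra hwU'
  exact hwU Uᶜ (by simpa using hU) (compl_ssubset_compl.mpr hU₀U) (mem_compl.mpr hwU')

theorem IsChain.exists_pair_forall_ne_iff (h𝒞 : IsChain (· ⊆ ·) 𝒞) (hU₀ : U₀ ∈ 𝒞)
    (hne : U₀.Nonempty) (hne' : U₀ᶜ.Nonempty) :
    ∃ v ∈ U₀, ∃ w ∉ U₀, ∀ U ∈ 𝒞, U ≠ U₀ → (v ∈ U ↔ w ∈ U) := by
  obtain ⟨v, hv, hvU⟩ := h𝒞.exists_mem_forall_notMem_of_ssubset (Set.toFinite _) hne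
  obtain ⟨w, hw, hwU⟩ := h𝒞.exists_notMem_forall_mem_of_ssuperset hne'
  refine ⟨v, hv, w, hw, fun U hU hUU₀ ↦ ?_⟩
  rcases h𝒞.total hU hU₀ with hsub | hsup
  · exact iff_of_false (hvU U hU (ssubset_of_subset_of_ne hsub hUU₀)) fun hwU' ↦ hw (hsub hwU')
  · exact iff_of_true (hsup hv) (hwU U hU (ssubset_of_subset_of_ne hsup hUU₀.symm))

end Chains

theorem stmt_14_general {V : Type*} [Fintype V] [DecidableEq V] (s t : V)
    (x : Sym2 V → ℝ) (hx : ∀ e, 0 ≤ x e)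
    (h2 : ∀ U : Finset V, U.Nonempty → U ⊆ univ \ {s, t} → 2 ≤ cutVal x U)
    (U₀ : Finset V) (hsU₀ : s ∈ U₀) (htU₀ : t ∉ U₀) (hnarrow : cutVal x U₀ < 2) :
    ∃ v w : V, Xor' (v ∈ U₀) (w ∈ U₀) ∧
      ∀ U : Finset V, s ∈ U → t ∉ U → cutVal x U < 2 →
        Xor' (v ∈ U) (w ∈ U) → U = U₀ := by
  obtain ⟨v, hv, w, hw, hsame⟩ := (isChain_isNarrowCut hx h2).exists_pair_forall_ne_iff
    (show IsNarrowCut s t x U₀ from ⟨hsU₀, htU₀, hnarrow⟩) ⟨s, hsU₀⟩ ⟨t, mem_compl.mpr htU₀⟩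
  refine ⟨v, w, Or.inl ⟨hv, hw⟩, fun U hsU htU hU hsep ↦ ?_⟩
  by_contra hne
  exact (xor_iff_not_iff _ _).mp hsep (hsame U ⟨hsU, htU, hU⟩ hne)

/-- For every narrow cut `δ(U₀)` of a feasible path-LP solution there is a pair of
vertices `v, w` such that `δ(U₀)` is the unique narrow cut separating `v` from `w`. -/
theorem stmt_14 {V : Type*} [Fintype V] [DecidableEq V] (s t : V) (hst : s ≠ t)
    (x : Sym2 V → ℝ) (hx : ∀ e, 0 ≤ x e)
    (h2 : ∀ U : Finset V, U.Nonempty → U ⊆ univ \ {s, t} → 2 ≤ cutVal x U)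
    (h1 : ∀ U : Finset V, s ∈ U → U ⊆ univ \ {t} → 1 ≤ cutVal x U)
    (U₀ : Finset V) (hsU₀ : s ∈ U₀) (htU₀ : t ∉ U₀) (hnarrow : cutVal x U₀ < 2) :
    ∃ v w : V, Xor' (v ∈ U₀) (w ∈ U₀) ∧
      ∀ U : Finset V, s ∈ U → t ∉ U → cutVal x U < 2 →
        Xor' (v ∈ U) (w ∈ U) → U = U₀ :=
  stmt_14_general s t x hx h2 U₀ hsU₀ htU₀ hnarrow
end
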